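/- In the configuration above, the area of the parallelogram C₂ D C₁ C equals the area of the triangle A B C. -/

import Mathlib

/-!
Rotating `A` about `B` by `-60°` and `B` about `A` by `+60°` both give the apex of the equilateral
triangle on `AB`, so `C₂ = A + ω (B - A)` with `ω = e^{iπ/3}`, and then `D - C₂ = ω (C - B)`.
Writing `a = A - C`, `b = B - C`, the parallelogram's oriented area is
`Im (conj (ω b) ((1 - ω) a + ω b)) = Im (conj ω (1 - ω) · conj b a)`. Since `ω` is a primitive sixth
root of unity, `conj ω (1 - ω) = conj ω ^ 2 = -ω`, and the right angle makes `conj b a` purely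
imaginary; so the area is `Re ω = 1/2` times the oriented area `Im (conj a b)` of the triangle.
-/

open Complex ComplexConjugate

def cross (u v : ℂ) : ℝ := u.re * v.im - u.im * v.re

lemma ofReal_pi_div_three : (↑Real.pi / 3 : ℂ) = ↑(Real.pi / 3) := by
  push_cast
  ring

lemma exp_pi_div_three_mul_I : exp (↑Real.pi / 3 * I) = 1 / 2 + (√3 / 2 : ℝ) * I := by
  rw [ofReal_pi_div_three, exp_mul_I, ← ofReal_cos, ← ofReal_sin, Real.cos_pi_div_three,
    Real.sin_pi_div_three]
  push_cast
  ring

lemma exp_pi_div_three_mul_I_re : (exp (↑Real.pi / 3 * I)).re = 1 / 2 := by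
  simp [exp_pi_div_three_mul_I]

lemma normSq_exp_pi_div_three_mul_I : normSq (exp (↑Real.pi / 3 * I)) = 1 := by
  rw [ofReal_pi_div_three, normSq_eq_norm_sq, norm_exp_ofReal_mul_I, one_pow]

lemma conj_eq_one_sub_of_re_eq_half {z : ℂ} (h : z.re = 1 / 2) : conj z = 1 - z := by
  apply Complex.ext
  · simp only [conj_re, sub_re, one_re]
    linarith
  · simp only [conj_im, sub_im, one_im, zero_sub]

lemma exp_neg_pi_div_three_mul_I : exp (-(↑Real.pi / 3) * I) = 1 - exp (↑Real.pi / 3 * I) := by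
  rw [← conj_eq_one_sub_of_re_eq_half exp_pi_div_three_mul_I_re, ← exp_conj]
  simp [map_div₀, conj_ofReal, map_ofNat, neg_mul]

lemma cross_rotate_of_inner_eq_zero {ω A B C : ℂ} (hre : ω.re = 1 / 2) (hnorm : normSq ω = 1)
    (horth : inner ℝ (A - C) (B - C) = 0) :
    cross (A + ω * (C - A) - (A + ω * (B - A))) (C - (A + ω * (B - A))) =
      1 / 2 * cross (B - A) (C - A) := by
  rw [Complex.inner] at horth
  simp only [cross, mul_re, mul_im, conj_re, conj_im, add_re, add_im, sub_re, sub_im] at horth ⊢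
  rw [normSq_apply] at hnorm
  set t := (B.re - C.re) * (A.im - C.im) - (B.im - C.im) * (A.re - C.re)
  linear_combination t * hre - t * hnorm - ω.im * horth

theorem parallelogram_area_eq_triangle_area_general (A B C : ℂ)
    (hright : EuclideanGeometry.angle A C B = Real.pi / 2)
    (C₂ D : ℂ)
    (hC₂ : C₂ = B + Complex.exp (-(Real.pi / 3 : ℂ) * Complex.I) * (A - B))
    (hD : D = A + Complex.exp ((Real.pi / 3 : ℂ) * Complex.I) * (C - A)) :
    |(D - C₂).re * (C - C₂).im - (D - C₂).im * (C - C₂).re| =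
      1 / 2 * |(B - A).re * (C - A).im - (B - A).im * (C - A).re| := by
  have hapex : C₂ = A + exp (↑Real.pi / 3 * I) * (B - A) := by
    rw [hC₂, exp_neg_pi_div_three_mul_I]
    ring
  have horth : inner ℝ (A - C) (B - C) = 0 :=
    (InnerProductGeometry.inner_eq_zero_iff_angle_eq_pi_div_two _ _).2 hright
  change |cross (D - C₂) (C - C₂)| = 1 / 2 * |cross (B - A) (C - A)|
  rw [hD, hapex, cross_rotate_of_inner_eq_zero exp_pi_div_three_mul_I_re
    normSq_exp_pi_div_three_mul_I horth, abs_mul, abs_of_pos one_half_pos]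

/-- In the right-triangle configuration, the area of the parallelogram `C₂ D C₁ C`
equals the area of the triangle `A B C`. -/
theorem parallelogram_area_eq_triangle_area (A B C : ℂ)
    (hind : AffineIndependent ℝ ![A, B, C])
    (hright : EuclideanGeometry.angle A C B = Real.pi / 2)
    (C₁ C₂ D : ℂ)
    (hC₁ : C₁ = A + Complex.exp ((Real.pi / 3 : ℂ) * Complex.I) * (B - A))
    (hC₂ : C₂ = B + Complex.exp (-(Real.pi / 3 : ℂ) * Complex.I) * (A - B))
    (hD : D = A + Complex.exp ((Real.pi / 3 : ℂ) * Complex.I) * (C - A)) :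
    |(D - C₂).re * (C - C₂).im - (D - C₂).im * (C - C₂).re| =
      1 / 2 * |(B - A).re * (C - A).im - (B - A).im * (C - A).re| :=
  parallelogram_area_eq_triangle_area_general A B C hright C₂ D hC₂ hD
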